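/- Let μ ≥ 0, σ² ≥ (μ - ⌊μ⌋)(1 - μ + ⌊μ⌋), α ∈ [0,1], d ∈ ℕ. Write δ = μ - ⌊μ⌋ and define μ' = α d + (1-α)μ, σ'² = α(d-μ)² + (1-α)σ². Then σ'² ≥ (1-α)δ(1-δ) + α(d - μ)², and moreover α(d-μ)² + (1-α)δ(1-δ) ≥ (μ' - ⌊μ'⌋)(1 - μ' + ⌊μ'⌋). -/

import Mathlib

/-!
`Int.fract x * (1 - Int.fract x)` is the least variance of an integer-valued random variable `X`
with mean `x`: for every integer `n`, `E[(X - n) * (X - n - 1)] ≥ 0` since `(k - n) * (k - n - 1)`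
is a product of consecutive integers, and this expectation equals `Var X - (x - n) * (n + 1 - x)`,
which for `n = ⌊x⌋` is `Var X - Int.fract x * (1 - Int.fract x)`. Taking `n = ⌊μ'⌋` for the law
with mass `α` at `d` and mass `1 - α` spread over `⌊μ⌋, ⌊μ⌋ + 1` with mean `μ` gives the second
inequality, even with `α * (1 - α)` in place of `α`.
-/

lemma Int.mul_sub_one_nonneg (k : ℤ) : 0 ≤ k * (k - 1) := by
  nlinarith [Int.le_self_sq k]

lemma sub_mul_sub_le_fract_mul_one_sub_fract (x : ℝ) (n : ℤ) :
    (x - n) * (n + 1 - x) ≤ Int.fract x * (1 - Int.fract x) := by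
  have hj : (0 : ℝ) ≤ (⌊x⌋ - n : ℤ) * ((⌊x⌋ - n : ℤ) - 1) := by
    exact_mod_cast Int.mul_sub_one_nonneg (⌊x⌋ - n)
  have hj' : (0 : ℝ) ≤ (⌊x⌋ - n + 1 : ℤ) * ((⌊x⌋ - n + 1 : ℤ) - 1) := by
    exact_mod_cast Int.mul_sub_one_nonneg (⌊x⌋ - n + 1)
  have hδ0 := Int.fract_nonneg x
  have hδ1 := Int.fract_lt_one x
  rw [Int.fract] at *
  push_cast at hj hj'
  nlinarith [mul_nonneg (sub_nonneg.2 hδ1.le) hj, mul_nonneg hδ0 hj']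

lemma fract_mul_one_sub_fract_convexComb_le (μ α : ℝ) (d : ℤ) (hα0 : 0 ≤ α) (hα1 : α ≤ 1) :
    Int.fract (α * d + (1 - α) * μ) * (1 - Int.fract (α * d + (1 - α) * μ)) ≤
      α * (1 - α) * ((d : ℝ) - μ) ^ 2 + (1 - α) * (Int.fract μ * (1 - Int.fract μ)) := by
  set t := α * d + (1 - α) * μ
  have hd : (0 : ℝ) ≤ (d - ⌊t⌋ : ℤ) * ((d - ⌊t⌋ : ℤ) - 1) := by
    exact_mod_cast Int.mul_sub_one_nonneg (d - ⌊t⌋)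
  push_cast at hd
  have hμ := mul_le_mul_of_nonneg_left (sub_mul_sub_le_fract_mul_one_sub_fract μ ⌊t⌋)
    (sub_nonneg.2 hα1)
  rw [← Int.self_sub_floor]
  linear_combination mul_nonneg hα0 hd + hμ

theorem ses_feasibility_decomposition_general
    (μ σ2 α : ℝ)
    (hfeas : σ2 ≥ (μ - ⌊μ⌋) * (1 - μ + ⌊μ⌋))
    (hα0 : 0 ≤ α) (hα1 : α ≤ 1) (d : ℕ)
    (δ μ' σ2' : ℝ) (hδ : δ = μ - ⌊μ⌋)
    (hμ' : μ' = α * d + (1 - α) * μ)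
    (hσ' : σ2' = α * ((d : ℝ) - μ) ^ 2 + (1 - α) * σ2) :
    σ2' ≥ (1 - α) * (δ * (1 - δ)) + α * ((d : ℝ) - μ) ^ 2 ∧
      α * ((d : ℝ) - μ) ^ 2 + (1 - α) * (δ * (1 - δ)) ≥
        (μ' - ⌊μ'⌋) * (1 - μ' + ⌊μ'⌋) := by
  rw [Int.self_sub_floor] at hδ
  subst hδ hμ' hσ'
  constructor
  · have hσ2 : Int.fract μ * (1 - Int.fract μ) ≤ σ2 := by
      rw [← Int.self_sub_floor]; linarith
    linarith [mul_le_mul_of_nonneg_left hσ2 (sub_nonneg.2 hα1)]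
  · have hkey := fract_mul_one_sub_fract_convexComb_le μ α d hα0 hα1
    rw [Int.cast_natCast] at hkey
    have hmix : α * (1 - α) * ((d : ℝ) - μ) ^ 2 ≤ α * ((d : ℝ) - μ) ^ 2 := by
      nlinarith [mul_nonneg (mul_nonneg hα0 hα0) (sq_nonneg ((d : ℝ) - μ))]
    calc _ = Int.fract (α * d + (1 - α) * μ) * (1 - Int.fract (α * d + (1 - α) * μ)) := by
          rw [← Int.self_sub_floor]; ring
      _ ≤ _ := hkey
      _ ≤ _ := by linarith

theorem ses_feasibility_decomposition
    (μ σ2 α : ℝ) (hμ : 0 ≤ μ)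
    (hfeas : σ2 ≥ (μ - ⌊μ⌋) * (1 - μ + ⌊μ⌋))
    (hα0 : 0 ≤ α) (hα1 : α ≤ 1) (d : ℕ)
    (δ μ' σ2' : ℝ) (hδ : δ = μ - ⌊μ⌋)
    (hμ' : μ' = α * d + (1 - α) * μ)
    (hσ' : σ2' = α * ((d : ℝ) - μ) ^ 2 + (1 - α) * σ2) :
    σ2' ≥ (1 - α) * (δ * (1 - δ)) + α * ((d : ℝ) - μ) ^ 2 ∧
      α * ((d : ℝ) - μ) ^ 2 + (1 - α) * (δ * (1 - δ)) ≥
        (μ' - ⌊μ'⌋) * (1 - μ' + ⌊μ'⌋) :=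
  ses_feasibility_decomposition_general μ σ2 α hfeas hα0 hα1 d δ μ' σ2' hδ hμ' hσ'
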